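/- arXiv:1603.08169 — 2 statements merged into one kernel-verified Lean document; each statement's English description precedes it below -/
import Mathlib

section
/- Let r > 0, h : [0,T] → (0,∞) continuous, C ≥ r·R with R ∈ [0,1). Then the function F(t) = exp{−∫_t^T (r + h(s))ds} + ∫_t^T (C + R·h(u))·exp{−∫_t^u (r + h(s))ds} du satisfies F(t) = R + (1−R)·exp{−∫_t^T (r+h(s))ds} whenever C = rR; more generally F(t) ≥ R + (1−R)·exp{−∫_t^T (r+h(s))ds} > R for all t ∈ [0,T). -/
open Real Set intervalIntegral

lemma key_exp_integral (g : ℝ → ℝ) (hg : Continuous g) (t T : ℝ) :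
    (∫ u in t..T, g u * Real.exp (-∫ s in t..u, g s))
      = 1 - Real.exp (-∫ s in t..T, g s) := by
  have hInt : ∀ a b : ℝ, IntervalIntegrable g MeasureTheory.volume a b :=
    fun a b => hg.intervalIntegrable a b
  have hG : ∀ u : ℝ, HasDerivAt (fun x => ∫ s in t..x, g s) (g u) u := by
    intro u
    exact intervalIntegral.integral_hasDerivAt_right (hInt t u)
      (hg.stronglyMeasurableAtFilter _ _) hg.continuousAt
  have hφ : ∀ u : ℝ, HasDerivAt (fun x => -Real.exp (-∫ s in t..x, g s))
      (g u * Real.exp (-∫ s in t..u, g s)) u := by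
    intro u
    have h1 := ((hG u).neg).exp
    have h2 := h1.neg
    refine h2.congr_deriv ?_
    simp only [Pi.neg_apply]
    ring
  have hcontG : Continuous fun u : ℝ => ∫ s in t..u, g s :=
    continuous_iff_continuousAt.2 fun u => (hG u).continuousAt
  have hcont : Continuous fun u => g u * Real.exp (-∫ s in t..u, g s) :=
    hg.mul (Real.continuous_exp.comp hcontG.neg)
  have heq := intervalIntegral.integral_eq_sub_of_hasDerivAt
      (f := fun x => -Real.exp (-∫ s in t..x, g s))
      (fun u _ => hφ u) (hcont.intervalIntegrable t T)
  rw [heq]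
  simp only [intervalIntegral.integral_same, neg_zero, Real.exp_zero]
  ring

/-- For `r > 0`, continuous `h > 0`, `C ≥ r R`, `0 ≤ R < 1`,
the pre-default price
`F(t) = exp (-∫_t^T (r+h)) + ∫_t^T (C + R h(u)) exp (-∫_t^u (r+h)) du`
equals `R + (1-R) exp (-∫_t^T (r+h))` when `C = r R`, and in general satisfies
`F(t) ≥ R + (1-R) exp (-∫_t^T (r+h)) > R` for `t ∈ [0,T)`. -/
theorem stmt10 (r T C R : ℝ) (hr : 0 < r) (hT : 0 < T)
    (hR0 : 0 ≤ R) (hR1 : R < 1) (hC : r * R ≤ C)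
    (h : ℝ → ℝ) (hcont : ContinuousOn h (Set.Icc 0 T))
    (hpos : ∀ t ∈ Set.Icc 0 T, 0 < h t)
    (F : ℝ → ℝ)
    (hF : ∀ t ∈ Set.Icc 0 T,
      F t = Real.exp (-∫ s in t..T, (r + h s)) +
            ∫ u in t..T, (C + R * h u) * Real.exp (-∫ s in t..u, (r + h s))) :
    (C = r * R → ∀ t ∈ Set.Icc 0 T,
        F t = R + (1 - R) * Real.exp (-∫ s in t..T, (r + h s))) ∧
    (∀ t ∈ Set.Ico 0 T,
        R + (1 - R) * Real.exp (-∫ s in t..T, (r + h s)) ≤ F t ∧ R < F t) := by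
  have hT0 : (0:ℝ) ≤ T := hT.le
  set h' : ℝ → ℝ := fun x => h ((Set.projIcc 0 T hT0 x : Set.Icc (0:ℝ) T) : ℝ) with hh'def
  have hh'cont : Continuous h' := by
    apply hcont.comp_continuous
    · exact continuous_subtype_val.comp continuous_projIcc
    · exact fun x => (Set.projIcc 0 T hT0 x).2
  have hh'eq : ∀ s ∈ Set.Icc (0:ℝ) T, h' s = h s := by
    intro s hs
    simp [hh'def, Set.projIcc_of_mem hT0 hs]
  set g : ℝ → ℝ := fun s => r + h' s with hgdef
  have hgcont : Continuous g := continuous_const.add hh'cont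
  have hgpos : ∀ s : ℝ, 0 < h' s := fun s => hpos _ (Set.projIcc 0 T hT0 s).2
  -- equality of integrals
  have eqI : ∀ a b : ℝ, a ∈ Set.Icc (0:ℝ) T → b ∈ Set.Icc (0:ℝ) T →
      (∫ s in a..b, (r + h s)) = ∫ s in a..b, g s := by
    intro a b ha hb
    apply intervalIntegral.integral_congr
    intro s hs
    have hs' : s ∈ Set.Icc (0:ℝ) T := Set.uIcc_subset_Icc ha hb hs
    simp [hgdef, hh'eq s hs']
  -- main estimate for t ∈ Icc 0 T
  have main : ∀ t ∈ Set.Icc (0:ℝ) T,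
      F t = Real.exp (-∫ s in t..T, g s) +
        ∫ u in t..T, (C + R * h' u) * Real.exp (-∫ s in t..u, g s) := by
    intro t ht
    rw [hF t ht, eqI t T ht (Set.right_mem_Icc.2 hT0)]
    congr 1
    apply intervalIntegral.integral_congr
    intro u hu
    have hu' : u ∈ Set.Icc (0:ℝ) T :=
      Set.uIcc_subset_Icc ht (Set.right_mem_Icc.2 hT0) hu
    simp only
    rw [← hh'eq u hu', eqI t u ht hu']
  have hTmem : T ∈ Set.Icc (0:ℝ) T := Set.right_mem_Icc.2 hT0
  have key : ∀ t : ℝ, (∫ u in t..T, g u * Real.exp (-∫ s in t..u, g s))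
      = 1 - Real.exp (-∫ s in t..T, g s) := fun t => key_exp_integral g hgcont t T
  have hcontG : ∀ t : ℝ, Continuous fun u : ℝ => ∫ s in t..u, g s := by
    intro t
    refine continuous_iff_continuousAt.2 fun u => ?_
    exact (intervalIntegral.integral_hasDerivAt_right (hgcont.intervalIntegrable t u)
      (hgcont.stronglyMeasurableAtFilter _ _) hgcont.continuousAt).continuousAt
  have bound : ∀ t ∈ Set.Icc (0:ℝ) T,
      R + (1 - R) * Real.exp (-∫ s in t..T, g s) ≤ F t := by
    intro t ht
    rw [main t ht]
    have hmono : (∫ u in t..T, R * (g u * Real.exp (-∫ s in t..u, g s)))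
        ≤ ∫ u in t..T, (C + R * h' u) * Real.exp (-∫ s in t..u, g s) := by
      apply intervalIntegral.integral_mono_on ht.2
      · exact ((continuous_const.mul (hgcont.mul
          (Real.continuous_exp.comp (hcontG t).neg)))).intervalIntegrable t T
      · exact ((continuous_const.add (continuous_const.mul hh'cont)).mul
          (Real.continuous_exp.comp (hcontG t).neg)).intervalIntegrable t T
      · intro u _
        have hexp : 0 < Real.exp (-∫ s in t..u, g s) := Real.exp_pos _
        have : R * g u ≤ C + R * h' u := by
          simp only [hgdef]
          nlinarith
        nlinarith
    have hR' : (∫ u in t..T, R * (g u * Real.exp (-∫ s in t..u, g s)))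
        = R * (1 - Real.exp (-∫ s in t..T, g s)) := by
      rw [intervalIntegral.integral_const_mul, key t]
    rw [hR'] at hmono
    nlinarith [Real.exp_pos (-∫ s in t..T, g s)]
  constructor
  · intro hCeq t ht
    rw [main t ht, eqI t T ht hTmem]
    have : (∫ u in t..T, (C + R * h' u) * Real.exp (-∫ s in t..u, g s))
        = R * (1 - Real.exp (-∫ s in t..T, g s)) := by
      rw [← key t, ← intervalIntegral.integral_const_mul]
      apply intervalIntegral.integral_congr
      intro u _
      rw [hCeq]
      ring
    rw [this]
    ring
  · intro t ht
    have ht' : t ∈ Set.Icc (0:ℝ) T := ⟨ht.1, ht.2.le⟩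
    have hb := bound t ht'
    rw [eqI t T ht' hTmem]
    refine ⟨hb, ?_⟩
    have hexp : 0 < Real.exp (-∫ s in t..T, g s) := Real.exp_pos _
    nlinarith
end

section
/- Let 0<γ<1, y>0, and let 𝒴_y(x) = x·e^{−y·x^{γ/(γ−1)}}. Then 𝒴_y maps (0,∞) bijectively onto (0,∞): its inverse 𝒴_y^{−1} is defined on all of (0,∞), is strictly increasing, and satisfies lim_{x→0⁺} 𝒴_y^{−1}(x) = 0 and lim_{x→+∞} 𝒴_y^{−1}(x) = +∞. -/
open Real Set Filter Topology

/-- For `0 < γ < 1` and `y > 0`, `𝒴_y(x) = x * exp (-y * x^(γ/(γ-1)))`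
maps `(0,∞)` bijectively onto `(0,∞)`; its inverse is strictly increasing on `(0,∞)`,
tends to `0` as `x → 0⁺` and to `+∞` as `x → +∞`. -/
theorem stmt12 (γ y : ℝ) (hγ0 : 0 < γ) (hγ1 : γ < 1) (hy : 0 < y) :
    Set.BijOn (fun x : ℝ => x * Real.exp (-y * x ^ (γ / (γ - 1))))
      (Set.Ioi 0) (Set.Ioi 0) ∧
    (∀ Yinv : ℝ → ℝ,
      (∀ x ∈ Set.Ioi (0 : ℝ), Yinv x ∈ Set.Ioi (0 : ℝ) ∧
        Yinv x * Real.exp (-y * Yinv x ^ (γ / (γ - 1))) = x) →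
      StrictMonoOn Yinv (Set.Ioi 0) ∧
      Filter.Tendsto Yinv (nhdsWithin 0 (Set.Ioi 0)) (nhds 0) ∧
      Filter.Tendsto Yinv Filter.atTop Filter.atTop) := by
  set p : ℝ := γ / (γ - 1) with hp
  have hpneg : p < 0 := div_neg_of_pos_of_neg hγ0 (by linarith)
  set f : ℝ → ℝ := fun x : ℝ => x * Real.exp (-y * x ^ p) with hf
  -- strict monotonicity of f
  have hmono : StrictMonoOn f (Set.Ioi 0) := by
    intro a ha b hb hab
    simp only [hf]
    have ha0 : (0:ℝ) < a := ha
    have hb0 : (0:ℝ) < b := hb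
    have hpow : b ^ p < a ^ p := Real.rpow_lt_rpow_of_neg ha0 hab hpneg
    have hexp : Real.exp (-y * a ^ p) < Real.exp (-y * b ^ p) := by
      apply Real.exp_lt_exp.2
      nlinarith
    calc a * Real.exp (-y * a ^ p) < b * Real.exp (-y * a ^ p) :=
          mul_lt_mul_of_pos_right hab (Real.exp_pos _)
      _ < b * Real.exp (-y * b ^ p) := mul_lt_mul_of_pos_left hexp hb0
  have hmaps : Set.MapsTo f (Set.Ioi 0) (Set.Ioi 0) := by
    intro x hx
    exact mul_pos hx (Real.exp_pos _)
  -- f x ≤ x on Ioi 0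
  have hle : ∀ x : ℝ, 0 < x → f x ≤ x := by
    intro x hx
    have h1 : Real.exp (-y * x ^ p) ≤ 1 := by
      apply Real.exp_le_one_iff.2
      have : (0:ℝ) < x ^ p := Real.rpow_pos_of_pos hx p
      nlinarith
    calc f x = x * Real.exp (-y * x ^ p) := rfl
      _ ≤ x * 1 := mul_le_mul_of_nonneg_left h1 hx.le
      _ = x := mul_one x
  -- f tends to atTop at atTop
  have htop : Tendsto f atTop atTop := by
    have h1 : Tendsto (fun x : ℝ => x ^ p) atTop (𝓝 0) := by
      have := tendsto_rpow_neg_atTop (y := -p) (by linarith)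
      simpa using this
    have h2 : Tendsto (fun x : ℝ => Real.exp (-y * x ^ p)) atTop (𝓝 1) := by
      have h3 : Tendsto (fun x : ℝ => -y * x ^ p) atTop (𝓝 0) := by
        simpa using h1.const_mul (-y)
      simpa [Function.comp_def] using (Real.continuous_exp.tendsto 0).comp h3
    exact Filter.Tendsto.atTop_mul_pos one_pos tendsto_id h2
  -- continuity on Ioi 0
  have hcont : ContinuousOn f (Set.Ioi 0) := by
    apply ContinuousOn.mul continuousOn_id
    apply Real.continuous_exp.comp_continuousOn
    apply ContinuousOn.mul continuousOn_const
    intro x hx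
    exact (Real.continuousAt_rpow_const x p (Or.inl (ne_of_gt hx))).continuousWithinAt
  -- surjectivity
  have hsurj : Set.SurjOn f (Set.Ioi 0) (Set.Ioi 0) := by
    intro z hz
    have hz0 : (0:ℝ) < z := hz
    set a : ℝ := z / 2 with ha
    have ha0 : 0 < a := by positivity
    have hfa : f a < z := lt_of_le_of_lt (hle a ha0) (by linarith)
    obtain ⟨b, hb1, hb2⟩ :=
      ((htop.eventually_ge_atTop z).and (eventually_ge_atTop a)).exists
    have hab : a ≤ b := hb2
    have hsub : Set.Icc a b ⊆ Set.Ioi 0 := fun t ht => lt_of_lt_of_le ha0 ht.1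
    have := intermediate_value_Icc hab (hcont.mono hsub)
    obtain ⟨x, hx, hfx⟩ := this ⟨hfa.le, hb1⟩
    exact ⟨x, hsub hx, hfx⟩
  constructor
  · exact ⟨hmaps, hmono.injOn, hsurj⟩
  · intro Yinv hY
    have hYpos : ∀ x ∈ Set.Ioi (0:ℝ), 0 < Yinv x := fun x hx => (hY x hx).1
    have hYeq : ∀ x ∈ Set.Ioi (0:ℝ), f (Yinv x) = x := fun x hx => (hY x hx).2
    have hYmono : StrictMonoOn Yinv (Set.Ioi 0) := by
      intro a ha b hb hab
      have h1 : f (Yinv a) < f (Yinv b) := by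
        rw [hYeq a ha, hYeq b hb]; exact hab
      exact (hmono.lt_iff_lt (hYpos a ha) (hYpos b hb)).1 h1
    refine ⟨hYmono, ?_, ?_⟩
    · rw [tendsto_order]
      constructor
      · intro c hc
        filter_upwards [self_mem_nhdsWithin] with x hx
        exact lt_trans hc (hYpos x hx)
      · intro ε hε
        have hfε : 0 < f ε := hmaps hε
        filter_upwards [Ioo_mem_nhdsGT_of_mem (Set.left_mem_Ico.2 hfε)] with x hx
        have hx0 : x ∈ Set.Ioi (0:ℝ) := hx.1
        have : f (Yinv x) < f ε := by rw [hYeq x hx0]; exact hx.2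
        exact (hmono.lt_iff_lt (hYpos x hx0) hε).1 this
    · rw [tendsto_atTop]
      intro M
      set M' : ℝ := max M 1 with hM'
      have hM'0 : (0:ℝ) < M' := lt_of_lt_of_le one_pos (le_max_right _ _)
      filter_upwards [eventually_gt_atTop (max (f M') 0)] with x hx
      have hx0 : x ∈ Set.Ioi (0:ℝ) := lt_of_le_of_lt (le_max_right _ _) hx
      have h1 : f M' < f (Yinv x) := by
        rw [hYeq x hx0]; exact lt_of_le_of_lt (le_max_left _ _) hx
      have h2 : M' < Yinv x := (hmono.lt_iff_lt hM'0 (hYpos x hx0)).1 h1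
      exact le_of_lt (lt_of_le_of_lt (le_max_left M 1) h2)
end
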